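/- The logical-entropy-based minimum-weight distance satisfies δ_h(P,Q) = 2·h(P ⊓ Q) − h(P) − h(Q) for all partitions P, Q of Fin n (n ≥ 1), where h is the logical entropy h(P) = (n·(n−1) − 2·s(P))/n² and δ_h is the minimum-weight walk distance in the Hasse-diagram graph with edge weights given by differences of h. -/

import Mathlib

open scoped BigOperators

/-- The size `s(P)` of a partition `P` of `Fin n`: the number of unordered pairs
`{i,j}` of distinct elements of `Fin n` that are `P`-equivalent (counted as
ordered pairs `(i,j)` with `i < j`). -/
noncomputable def partSize (n : ℕ) (P : Setoid (Fin n)) : ℕ :=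
  Set.ncard {p : Fin n × Fin n | p.1 < p.2 ∧ P.r p.1 p.2}

/-- The Hasse-diagram graph of the partition lattice: `P` and `Q` are adjacent
iff one covers the other. -/
def hasse (n : ℕ) : SimpleGraph (Setoid (Fin n)) where
  Adj P Q := P ⋖ Q ∨ Q ⋖ P
  symm := ⟨fun P Q h => h.symm⟩
  loopless := ⟨fun P h => by cases h with
    | inl h => exact lt_irrefl P h.lt
    | inr h => exact lt_irrefl P h.lt⟩

/-- The weight of an edge `{P,Q}` induced by `f`: `|f(P) - f(Q)|`. -/
noncomputable def eWeight {n : ℕ} (f : Setoid (Fin n) → ℝ) : Sym2 (Setoid (Fin n)) → ℝ :=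
  Sym2.lift ⟨fun P Q => |f P - f Q|, fun P Q => abs_sub_comm (f P) (f Q)⟩

/-- The weight of a walk in the Hasse diagram: the sum of its edge weights. -/
noncomputable def walkWeight {n : ℕ} (f : Setoid (Fin n) → ℝ) {P Q : Setoid (Fin n)}
    (W : (hasse n).Walk P Q) : ℝ :=
  (W.edges.map (eWeight f)).sum

/-- The minimum-`f`-weight distance `δ_f(P,Q)`: the minimum weight of a walk
from `P` to `Q` in the Hasse diagram. -/
noncomputable def deltaW {n : ℕ} (f : Setoid (Fin n) → ℝ) (P Q : Setoid (Fin n)) : ℝ :=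
  sInf {w : ℝ | ∃ W : (hasse n).Walk P Q, walkWeight f W = w}

/-- Logical entropy of a partition: `h(P) = (n(n-1) - 2 s(P)) / n²`. -/
noncomputable def logicalEntropy (n : ℕ) (P : Setoid (Fin n)) : ℝ :=
  ((n * (n - 1) : ℝ) - 2 * (partSize n P : ℝ)) / (n ^ 2 : ℝ)

/-!
Write `E(P)` (`relPairs P` below) for the set of pairs `i < j` with `i ~_P j`, so that
`h(P) = c - (2/n²)·#E(P)`.
Since `E` is monotone, every Hasse edge `{A, B}` has weight `(2/n²)·#(E(A) ∆ E(B))`, and the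
triangle inequality for `#(· ∆ ·)` bounds the weight of every walk from `P` to `Q` below by
`(2/n²)·#(E(P) ∆ E(Q)) = 2 h(P ⊓ Q) - h(P) - h(Q)`, using `E(P ⊓ Q) = E(P) ∩ E(Q)`.
The bound is attained by descending along covers from `P` to `P ⊓ Q` and ascending to `Q`:
on a monotone walk the weights of an antitone function telescope.
-/

open scoped symmDiff

instance Setoid.instFinite {α : Type*} [Finite α] : Finite (Setoid α) :=
  Finite.of_injective (fun P : Setoid α => ⇑P) fun _ _ h => Setoid.eq_iff_rel_eq.2 h

section walkWeight

variable {n : ℕ} (f : Setoid (Fin n) → ℝ)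

lemma walkWeight_cons {A B C : Setoid (Fin n)} (h : (hasse n).Adj A B) (W : (hasse n).Walk B C) :
    walkWeight f (.cons h W) = |f A - f B| + walkWeight f W := by
  simp [walkWeight, eWeight]

lemma walkWeight_append {A B C : Setoid (Fin n)} (W₁ : (hasse n).Walk A B)
    (W₂ : (hasse n).Walk B C) :
    walkWeight f (W₁.append W₂) = walkWeight f W₁ + walkWeight f W₂ := by
  simp [walkWeight]

lemma walkWeight_reverse {A B : Setoid (Fin n)} (W : (hasse n).Walk A B) :
    walkWeight f W.reverse = walkWeight f W := by
  simp [walkWeight]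

variable {f}

lemma exists_walkWeight_eq_sub_of_le (hf : Antitone f) {R S : Setoid (Fin n)} (hRS : R ≤ S) :
    ∃ W : (hasse n).Walk S R, walkWeight f W = f R - f S := by
  induction S using WellFoundedLT.induction with
  | _ S ih =>
    rcases hRS.eq_or_lt with rfl | hlt
    · exact ⟨.nil, by simp [walkWeight]⟩
    obtain ⟨T, hRT, hTS⟩ := exists_le_covBy_of_lt hlt
    obtain ⟨W, hW⟩ := ih T hTS.lt hRT
    refine ⟨.cons (show (hasse n).Adj S T from Or.inr hTS) W, ?_⟩
    rw [walkWeight_cons, hW, abs_of_nonpos (sub_nonpos.2 (hf hTS.le))]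
    ring

end walkWeight

section relPairs

variable {n : ℕ}

open Classical in
noncomputable def relPairs (P : Setoid (Fin n)) : Finset (Fin n × Fin n) :=
  {p | p.1 < p.2 ∧ P.r p.1 p.2}

lemma partSize_eq_card_relPairs (P : Setoid (Fin n)) : partSize n P = (relPairs P).card := by
  rw [partSize, ← Set.ncard_coe_finset]
  congr 1
  ext p
  simp [relPairs]

lemma relPairs_mono : Monotone (relPairs (n := n)) := by
  intro P Q hPQ p
  simp only [relPairs, Finset.mem_filter, Finset.mem_univ, true_and]
  exact And.imp_right (@hPQ _ _)

lemma relPairs_inf (P Q : Setoid (Fin n)) : relPairs (P ⊓ Q) = relPairs P ∩ relPairs Q := by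
  ext p
  simp only [relPairs, Finset.mem_filter, Finset.mem_univ, true_and, Finset.mem_inter]
  exact ⟨fun ⟨hlt, hP, hQ⟩ => ⟨⟨hlt, hP⟩, hlt, hQ⟩, fun ⟨⟨hlt, hP⟩, _, hQ⟩ => ⟨hlt, hP, hQ⟩⟩

end relPairs

lemma Finset.card_symmDiff_add_two_mul_card_inter {α : Type*} [DecidableEq α] (s t : Finset α) :
    (s ∆ t).card + 2 * (s ∩ t).card = s.card + t.card := by
  have hsub : s ∩ t ⊆ s ∪ t := Finset.inter_subset_left.trans Finset.subset_union_left
  rw [symmDiff_eq_sup_sdiff_inf, Finset.sup_eq_union, Finset.inf_eq_inter,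
    Finset.card_sdiff_of_subset hsub, ← Finset.card_union_add_card_inter]
  have := Finset.card_le_card hsub
  omega

lemma Finset.card_symmDiff_le {α : Type*} [DecidableEq α] (s t u : Finset α) :
    (s ∆ u).card ≤ (s ∆ t).card + (t ∆ u).card :=
  (Finset.card_le_card (symmDiff_triangle s t u)).trans (Finset.card_union_le _ _)

section logicalEntropy

variable {n : ℕ}

lemma logicalEntropy_sub_logicalEntropy (P Q : Setoid (Fin n)) :
    logicalEntropy n P - logicalEntropy n Q =
      2 / (n : ℝ) ^ 2 * ((relPairs Q).card - (relPairs P).card) := by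
  simp only [logicalEntropy, partSize_eq_card_relPairs]
  ring

lemma logicalEntropy_antitone : Antitone (logicalEntropy n) := fun P Q hPQ => by
  rw [← sub_nonneg, logicalEntropy_sub_logicalEntropy]
  have hcard : ((relPairs P).card : ℝ) ≤ (relPairs Q).card := by
    exact_mod_cast Finset.card_le_card (relPairs_mono hPQ)
  positivity

lemma abs_logicalEntropy_sub_of_le {A B : Setoid (Fin n)} (h : A ≤ B) :
    |logicalEntropy n A - logicalEntropy n B| =
      2 / (n : ℝ) ^ 2 * (relPairs A ∆ relPairs B).card := by
  have hsub := relPairs_mono h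
  rw [abs_of_nonneg (sub_nonneg.2 (logicalEntropy_antitone h)),
    logicalEntropy_sub_logicalEntropy, symmDiff_of_le hsub, Finset.card_sdiff_of_subset hsub,
    Nat.cast_sub (Finset.card_le_card hsub)]

lemma abs_logicalEntropy_sub_of_adj {A B : Setoid (Fin n)} (h : (hasse n).Adj A B) :
    |logicalEntropy n A - logicalEntropy n B| =
      2 / (n : ℝ) ^ 2 * (relPairs A ∆ relPairs B).card := by
  rcases h with h | h
  · exact abs_logicalEntropy_sub_of_le h.le
  · rw [abs_sub_comm, symmDiff_comm]
    exact abs_logicalEntropy_sub_of_le h.le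

lemma card_symmDiff_relPairs_le_walkWeight {A B : Setoid (Fin n)} (W : (hasse n).Walk A B) :
    2 / (n : ℝ) ^ 2 * (relPairs A ∆ relPairs B).card ≤ walkWeight (logicalEntropy n) W := by
  induction W with
  | nil => simp [walkWeight]
  | @cons A B C h W ih =>
    rw [walkWeight_cons, abs_logicalEntropy_sub_of_adj h]
    have htri : ((relPairs A ∆ relPairs C).card : ℝ) ≤
        (relPairs A ∆ relPairs B).card + (relPairs B ∆ relPairs C).card := by
      exact_mod_cast Finset.card_symmDiff_le _ _ _
    have hc : (0 : ℝ) ≤ 2 / (n : ℝ) ^ 2 := by positivity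
    linarith [mul_le_mul_of_nonneg_left htri hc]

lemma two_mul_logicalEntropy_inf_sub (P Q : Setoid (Fin n)) :
    2 * logicalEntropy n (P ⊓ Q) - logicalEntropy n P - logicalEntropy n Q =
      2 / (n : ℝ) ^ 2 * (relPairs P ∆ relPairs Q).card := by
  have hcard : ((relPairs P ∆ relPairs Q).card : ℝ) =
      (relPairs P).card + (relPairs Q).card - 2 * (relPairs (P ⊓ Q)).card := by
    rw [relPairs_inf, eq_sub_iff_add_eq]
    exact_mod_cast Finset.card_symmDiff_add_two_mul_card_inter _ _
  simp only [logicalEntropy, partSize_eq_card_relPairs, hcard]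
  ring

end logicalEntropy

theorem deltaW_logicalEntropy_general (n : ℕ) (P Q : Setoid (Fin n)) :
    deltaW (logicalEntropy n) P Q =
      2 * logicalEntropy n (P ⊓ Q) - logicalEntropy n P - logicalEntropy n Q := by
  refine IsLeast.csInf_eq ⟨?_, ?_⟩
  · obtain ⟨W₁, hW₁⟩ := exists_walkWeight_eq_sub_of_le logicalEntropy_antitone inf_le_left
    obtain ⟨W₂, hW₂⟩ := exists_walkWeight_eq_sub_of_le logicalEntropy_antitone inf_le_right
    refine ⟨W₁.append W₂.reverse, ?_⟩
    rw [walkWeight_append, walkWeight_reverse, hW₁, hW₂]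
    ring
  · rintro _ ⟨W, rfl⟩
    rw [two_mul_logicalEntropy_inf_sub]
    exact card_symmDiff_relPairs_le_walkWeight W

/-- The logical-entropy-based minimum-weight distance satisfies
`δ_h(P,Q) = 2 h(P ⊓ Q) - h(P) - h(Q)`. -/
theorem deltaW_logicalEntropy (n : ℕ) (hn : 1 ≤ n) (P Q : Setoid (Fin n)) :
    deltaW (logicalEntropy n) P Q =
      2 * logicalEntropy n (P ⊓ Q) - logicalEntropy n P - logicalEntropy n Q :=
  deltaW_logicalEntropy_general n P Q
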